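/- Let 0 < H < 1. There exists a constant τ > 0, depending only on H, such that for all real numbers 0 ≤ r ≤ s one has s^{2H} r^{2H} − R_H(s,r)² ≥ τ (s−r)^{2H} r^{2H}, where R_H(s,r) = (1/2)(s^{2H} + r^{2H} − |s−r|^{2H}) is the covariance of fractional Brownian motion, i.e. R_H(s,r) = E[B^H_s B^H_r]. -/

import Mathlib

open Real

/-- Covariance function of fractional Brownian motion with Hurst parameter `H`. -/
noncomputable def RH (H t s : ℝ) : ℝ :=
  (t ^ (2 * H) + s ^ (2 * H) - |t - s| ^ (2 * H)) / 2

/-!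
Put `p = 2H ∈ (0, 2)`, `x = r`, `y = s - r` and `D = (x + y)^p - x^p - y^p`. Expanding the
covariance gives `s^p r^p - R_H(s, r)^2 = x^p y^p - D^2 / 4`, so it suffices to bound
`D^2 ≤ K x^p y^p` with a constant `K < 4`. For `p ≤ 1` the map `t ↦ t^p` is subadditive and
monotone, so `-min(x^p, y^p) ≤ D ≤ 0` and `K = 1` works. For `1 ≤ p ≤ 2` we have
`0 ≤ D ≤ p x y^(p-1)` and, symmetrically, `D ≤ p y x^(p-1)`; multiplying gives `K = p^2 < 4`.
-/

namespace Real

/- The derivative `p t^(p-1)` of `t ↦ t^p` is subadditive for `1 ≤ p ≤ 2`, so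
`t ↦ (t + y)^p - t^p` grows at rate at most `p y^(p-1)`. -/
lemma add_rpow_le_rpow_add_rpow_add_mul {p x y : ℝ} (hx : 0 ≤ x) (hy : 0 < y) (hp1 : 1 ≤ p)
    (hp2 : p ≤ 2) :
    (x + y) ^ p ≤ x ^ p + y ^ p + p * x * y ^ (p - 1) := by
  set g : ℝ → ℝ := fun t ↦ t ^ p + p * t * y ^ (p - 1) - (t + y) ^ p
  have hg : MonotoneOn g (Set.Icc 0 x) := by
    refine monotoneOn_of_hasDerivWithinAt_nonneg (convex_Icc 0 x)
      (f' := fun t ↦ p * t ^ (p - 1) + p * y ^ (p - 1) - p * (t + y) ^ (p - 1)) ?_ ?_ ?_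
    · have hp0 : 0 ≤ p := by linarith
      exact ((continuousOn_id.rpow_const fun _ _ ↦ Or.inr hp0).add (by fun_prop)).sub
        ((continuousOn_id.add continuousOn_const).rpow_const fun _ _ ↦ Or.inr hp0)
    · intro t ht
      rw [interior_Icc] at ht
      have h1 := hasDerivAt_rpow_const (p := p) (Or.inl ht.1.ne')
      have h2 := ((hasDerivAt_id' t).const_mul p).mul_const (y ^ (p - 1))
      have h3 := ((hasDerivAt_id' t).add_const y).rpow_const (p := p) (Or.inl (by linarith [ht.1]))
      simp only [mul_one, one_mul] at h2 h3
      exact ((h1.add h2).sub h3).hasDerivWithinAt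
    · intro t ht
      rw [interior_Icc] at ht
      have hsub : (t + y) ^ (p - 1) ≤ t ^ (p - 1) + y ^ (p - 1) :=
        rpow_add_le_add_rpow ht.1.le hy.le (by linarith) (by linarith)
      nlinarith
  have h0x := hg (Set.left_mem_Icc.2 hx) (Set.right_mem_Icc.2 hx) hx
  simp only [g, zero_rpow (by linarith : p ≠ 0), zero_add, mul_zero, zero_mul] at h0x
  linarith

lemma sq_add_rpow_sub_rpow_sub_rpow_le_of_le_one {p x y : ℝ} (hx : 0 ≤ x) (hy : 0 ≤ y)
    (hp0 : 0 ≤ p) (hp1 : p ≤ 1) :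
    ((x + y) ^ p - x ^ p - y ^ p) ^ 2 ≤ x ^ p * y ^ p := by
  have hsub := rpow_add_le_add_rpow hx hy hp0 hp1
  have hxle : x ^ p ≤ (x + y) ^ p := rpow_le_rpow hx (by linarith) hp0
  have hyle : y ^ p ≤ (x + y) ^ p := rpow_le_rpow hy (by linarith) hp0
  have hxp := rpow_nonneg hx p
  have hyp := rpow_nonneg hy p
  rcases le_total (x ^ p) (y ^ p) with h | h <;> nlinarith

lemma sq_add_rpow_sub_rpow_sub_rpow_le_of_one_le {p x y : ℝ} (hx : 0 ≤ x) (hy : 0 ≤ y)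
    (hp1 : 1 ≤ p) (hp2 : p ≤ 2) :
    ((x + y) ^ p - x ^ p - y ^ p) ^ 2 ≤ p ^ 2 * (x ^ p * y ^ p) := by
  have hp0 : p ≠ 0 := by linarith
  rcases hx.eq_or_lt with rfl | hx
  · simp [zero_rpow hp0]
  rcases hy.eq_or_lt with rfl | hy
  · simp [zero_rpow hp0]
  have hsuper := add_rpow_le_rpow_add hx.le hy.le hp1
  have hxy := add_rpow_le_rpow_add_rpow_add_mul hx.le hy hp1 hp2
  have hyx := add_rpow_le_rpow_add_rpow_add_mul hy.le hx hp1 hp2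
  rw [add_comm y x] at hyx
  have hx' : x * x ^ (p - 1) = x ^ p := by
    rw [← rpow_one_add' hx.le (by simpa using hp0), add_sub_cancel]
  have hy' : y * y ^ (p - 1) = y ^ p := by
    rw [← rpow_one_add' hy.le (by simpa using hp0), add_sub_cancel]
  calc ((x + y) ^ p - x ^ p - y ^ p) ^ 2
      ≤ (p * x * y ^ (p - 1)) * (p * y * x ^ (p - 1)) := by
        have := mul_le_mul hxy hyx
        nlinarith
    _ = p ^ 2 * (x ^ p * y ^ p) := by rw [← hx', ← hy']; ring

lemma sq_add_rpow_sub_rpow_sub_rpow_le {p x y : ℝ} (hx : 0 ≤ x) (hy : 0 ≤ y) (hp0 : 0 ≤ p)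
    (hp2 : p ≤ 2) :
    ((x + y) ^ p - x ^ p - y ^ p) ^ 2 ≤ max 1 (p ^ 2) * (x ^ p * y ^ p) := by
  have hxy := mul_nonneg (rpow_nonneg hx p) (rpow_nonneg hy p)
  rcases le_total p 1 with hp1 | hp1
  · exact (sq_add_rpow_sub_rpow_sub_rpow_le_of_le_one hx hy hp0 hp1).trans
      (le_mul_of_one_le_left hxy (le_max_left _ _))
  · exact (sq_add_rpow_sub_rpow_sub_rpow_le_of_one_le hx hy hp1 hp2).trans
      (mul_le_mul_of_nonneg_right (le_max_right _ _) hxy)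

end Real

lemma rpow_mul_rpow_sub_RH_sq {H r s : ℝ} (hrs : r ≤ s) :
    s ^ (2 * H) * r ^ (2 * H) - RH H s r ^ 2 =
      r ^ (2 * H) * (s - r) ^ (2 * H) - (s ^ (2 * H) - r ^ (2 * H) - (s - r) ^ (2 * H)) ^ 2 / 4 := by
  rw [RH, abs_of_nonneg (sub_nonneg.2 hrs)]
  ring

theorem statement1 (H : ℝ) (hH : 0 < H) (hH' : H < 1) :
    ∃ τ : ℝ, 0 < τ ∧ ∀ r s : ℝ, 0 ≤ r → r ≤ s →
      τ * ((s - r) ^ (2 * H) * r ^ (2 * H)) ≤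
        s ^ (2 * H) * r ^ (2 * H) - (RH H s r) ^ 2 := by
  have hK : max 1 ((2 * H) ^ 2) < 4 := max_lt (by norm_num) (by nlinarith)
  refine ⟨1 - max 1 ((2 * H) ^ 2) / 4, by linarith, fun r s hr hrs ↦ ?_⟩
  have hD := sq_add_rpow_sub_rpow_sub_rpow_le (p := 2 * H) hr (sub_nonneg.2 hrs) (by linarith) (by linarith)
  rw [add_sub_cancel] at hD
  rw [rpow_mul_rpow_sub_RH_sq hrs]
  linarith
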